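/- arXiv:1905.09256 — 3 statements merged into one kernel-verified Lean document; each statement's English description precedes it below -/
import Mathlib

section
/- Let G be an X-generated group. The projection F(G) → G, (Γ,g) ↦ g, is a surjective monoid morphism which is idempotent pure (the preimage of 1 consists entirely of idempotents); its kernel congruence is exactly the minimum group congruence σ of F(G) (i.e., (Γ,g) σ (Ξ,h) iff g = h), so G is the maximum group quotient of F(G). Moreover, for each g ∈ G the element (Δ_g, g) is the maximum element of its σ-class; hence F(G) is an F-inverse monoid with max-operation m(Γ,g) = (Δ_g, g). -/
namespace FInvPaper

universe u v w

section Generic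
variable {S : Type u}

/-- The natural partial order on an inverse monoid: `a ≤ b` iff `a = b·e` for some idempotent. -/
def nle [Mul S] (a b : S) : Prop := ∃ e : S, e * e = e ∧ a = b * e

/-- The minimum group congruence σ: `a σ b` iff `a·e = b·e` for some idempotent `e`. -/
def sigma [Mul S] (a b : S) : Prop := ∃ e : S, e * e = e ∧ a * e = b * e

/-- `m` assigns to every element the maximum element of its σ-class. -/
def IsMaxOp [Mul S] (m : S → S) : Prop :=
  ∀ a : S, sigma (m a) a ∧ ∀ b : S, sigma b a → nle b (m a)

/-- A subset of `S` which is an entire σ-class. -/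
def IsSigmaClass [Mul S] (A : Set S) : Prop := ∃ a : S, A = {b : S | sigma b a}

end Generic

/-- Inverse monoids: monoids with an involution satisfying `a·a⁻¹·a = a`, `(a·b)⁻¹ = b⁻¹·a⁻¹`,
in which all idempotents commute. -/
class InverseMonoid (S : Type u) extends Monoid S, Inv S where
  inv_inv : ∀ a : S, a⁻¹⁻¹ = a
  mul_inv_rev : ∀ a b : S, (a * b)⁻¹ = b⁻¹ * a⁻¹
  mul_inv_self_mul : ∀ a : S, a * a⁻¹ * a = a
  idem_comm : ∀ e f : S, e * e = e → f * f = f → e * f = f * e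

/-- F-inverse monoids in the enriched signature `(·, ⁻¹, ᵐ, 1)`. -/
class FInverseMonoid (S : Type u) extends InverseMonoid S where
  mx : S → S
  mx_isMaxOp : IsMaxOp mx

/-- The max-operation of an F-inverse monoid. -/
def mx {S : Type u} [FInverseMonoid S] : S → S := FInverseMonoid.mx

section InverseMonoidLemmas

variable {S : Type u} [InverseMonoid S]

lemma mul_inv_idem (a : S) : (a * a⁻¹) * (a * a⁻¹) = a * a⁻¹ := by
  conv_lhs => rw [← mul_assoc, InverseMonoid.mul_inv_self_mul]

lemma inv_mul_self_mul (a : S) : a⁻¹ * a * a⁻¹ = a⁻¹ := by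
  have h := InverseMonoid.mul_inv_self_mul (a := a⁻¹)
  rwa [InverseMonoid.inv_inv] at h

lemma inv_mul_idem (a : S) : (a⁻¹ * a) * (a⁻¹ * a) = a⁻¹ * a := by
  conv_lhs => rw [← mul_assoc, inv_mul_self_mul]

lemma idem_inv {e : S} (he : e * e = e) : e⁻¹ = e := by
  have h1 : e⁻¹ * e⁻¹ = e⁻¹ := by rw [← InverseMonoid.mul_inv_rev, he]
  have hc : e * e⁻¹ = e⁻¹ * e := InverseMonoid.idem_comm e e⁻¹ he h1
  have h2 : e = e * e⁻¹ := by
    calc e = e * e⁻¹ * e := (InverseMonoid.mul_inv_self_mul e).symm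
    _ = e * (e⁻¹ * e) := mul_assoc _ _ _
    _ = e * (e * e⁻¹) := by rw [hc]
    _ = e * e * e⁻¹ := (mul_assoc _ _ _).symm
    _ = e * e⁻¹ := by rw [he]
  have h3 : e⁻¹ = e⁻¹ * e := by
    calc e⁻¹ = e⁻¹ * e * e⁻¹ := (inv_mul_self_mul e).symm
    _ = e⁻¹ * (e * e⁻¹) := mul_assoc _ _ _
    _ = e⁻¹ * (e⁻¹ * e) := by rw [hc]
    _ = e⁻¹ * e⁻¹ * e := (mul_assoc _ _ _).symm
    _ = e⁻¹ * e := by rw [h1]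
  rw [h3, ← hc, ← h2]

lemma idem_mul_idem {e f : S} (he : e * e = e) (hf : f * f = f) :
    (e * f) * (e * f) = e * f := by
  calc (e * f) * (e * f) = e * (f * (e * f)) := mul_assoc _ _ _
  _ = e * (f * e * f) := by rw [← mul_assoc f e f]
  _ = e * (e * f * f) := by rw [← InverseMonoid.idem_comm e f he hf]
  _ = e * (e * (f * f)) := by rw [mul_assoc e f f]
  _ = e * (e * f) := by rw [hf]
  _ = e * e * f := (mul_assoc _ _ _).symm
  _ = e * f := by rw [he]

lemma sigma_refl (a : S) : sigma a a := ⟨1, one_mul 1, rfl⟩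

lemma sigma_symm {a b : S} (h : sigma a b) : sigma b a := by
  obtain ⟨e, he, hab⟩ := h
  exact ⟨e, he, hab.symm⟩

lemma sigma_trans {a b c : S} (h₁ : sigma a b) (h₂ : sigma b c) : sigma a c := by
  obtain ⟨e, he, h1⟩ := h₁
  obtain ⟨f, hf, h2⟩ := h₂
  refine ⟨e * f, idem_mul_idem he hf, ?_⟩
  calc a * (e * f) = a * e * f := (mul_assoc _ _ _).symm
  _ = b * e * f := by rw [h1]
  _ = b * (e * f) := mul_assoc _ _ _
  _ = b * (f * e) := by rw [InverseMonoid.idem_comm e f he hf]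
  _ = b * f * e := (mul_assoc _ _ _).symm
  _ = c * f * e := by rw [h2]
  _ = c * (f * e) := mul_assoc _ _ _
  _ = c * (e * f) := by rw [InverseMonoid.idem_comm e f he hf]

lemma sigma_mul_left {a b : S} (c : S) (h : sigma a b) : sigma (c * a) (c * b) := by
  obtain ⟨e, he, hab⟩ := h
  exact ⟨e, he, by rw [mul_assoc, hab, ← mul_assoc]⟩

lemma inner_lemma {e : S} (he : e * e = e) (a : S) :
    a⁻¹ * (a * e * a⁻¹) = e * a⁻¹ := by
  calc a⁻¹ * (a * e * a⁻¹) = a⁻¹ * (a * e) * a⁻¹ := by rw [← mul_assoc a⁻¹ (a * e) a⁻¹]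
  _ = a⁻¹ * a * e * a⁻¹ := by rw [← mul_assoc a⁻¹ a e]
  _ = e * (a⁻¹ * a) * a⁻¹ := by rw [InverseMonoid.idem_comm (a⁻¹ * a) e (inv_mul_idem a) he]
  _ = e * (a⁻¹ * a * a⁻¹) := by rw [mul_assoc e (a⁻¹ * a) a⁻¹]
  _ = e * a⁻¹ := by rw [inv_mul_self_mul]

lemma sigma_inv {a b : S} (h : sigma a b) : sigma a⁻¹ b⁻¹ := by
  obtain ⟨e, he, hab⟩ := h
  have key5 : e * a⁻¹ = e * b⁻¹ := by
    have h' : (a * e)⁻¹ = (b * e)⁻¹ := by rw [hab]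
    rwa [InverseMonoid.mul_inv_rev, InverseMonoid.mul_inv_rev, idem_inv he] at h'
  have key1 : (a * e * a⁻¹) * (a * e * a⁻¹) = a * e * a⁻¹ := by
    calc (a * e * a⁻¹) * (a * e * a⁻¹) = a * e * (a⁻¹ * (a * e * a⁻¹)) := mul_assoc _ _ _
    _ = a * e * (e * a⁻¹) := by rw [inner_lemma he a]
    _ = a * e * e * a⁻¹ := (mul_assoc _ _ _).symm
    _ = a * (e * e) * a⁻¹ := by rw [mul_assoc a e e]
    _ = a * e * a⁻¹ := by rw [he]
  have key3 : a * e * a⁻¹ = b * e * b⁻¹ := by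
    calc a * e * a⁻¹ = a * (e * e) * a⁻¹ := by rw [he]
    _ = a * e * e * a⁻¹ := by rw [← mul_assoc a e e]
    _ = a * e * (e * a⁻¹) := mul_assoc _ _ _
    _ = a * e * (e * b⁻¹) := by rw [key5]
    _ = b * e * (e * b⁻¹) := by rw [hab]
    _ = b * e * e * b⁻¹ := (mul_assoc _ _ _).symm
    _ = b * (e * e) * b⁻¹ := by rw [mul_assoc b e e]
    _ = b * e * b⁻¹ := by rw [he]
  refine ⟨a * e * a⁻¹, key1, ?_⟩
  rw [inner_lemma he a, key5, key3, inner_lemma he b]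

lemma sigma_mul_right {a b : S} (c : S) (h : sigma a b) : sigma (a * c) (b * c) := by
  have h1 := sigma_mul_left c⁻¹ (sigma_inv h)
  have h2 := sigma_inv h1
  rwa [InverseMonoid.mul_inv_rev c⁻¹ a⁻¹, InverseMonoid.mul_inv_rev c⁻¹ b⁻¹,
    InverseMonoid.inv_inv, InverseMonoid.inv_inv, InverseMonoid.inv_inv] at h2

instance sigmaSetoid (S : Type u) [InverseMonoid S] : Setoid S where
  r := sigma
  iseqv := ⟨sigma_refl, sigma_symm, sigma_trans⟩

/-- The maximum group quotient `S/σ`. -/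
def GQuot (S : Type u) [InverseMonoid S] : Type u := Quotient (sigmaSetoid S)

/-- The σ-class of an element, as an element of the maximum group quotient. -/
def σclass {S : Type u} [InverseMonoid S] (a : S) : GQuot S := Quotient.mk (sigmaSetoid S) a

instance (S : Type u) [InverseMonoid S] : Group (GQuot S) where
  mul := Quotient.map₂ (· * ·) (fun _ _ h₁ _ _ h₂ =>
    sigma_trans (sigma_mul_right _ h₁) (sigma_mul_left _ h₂))
  one := σclass 1
  inv := Quotient.map (·⁻¹) (fun _ _ h => sigma_inv h)
  mul_assoc := by
    intro a b c
    induction a using Quotient.ind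
    induction b using Quotient.ind
    induction c using Quotient.ind
    exact congrArg (Quotient.mk _) (mul_assoc _ _ _)
  one_mul := by
    intro a
    induction a using Quotient.ind
    exact congrArg (Quotient.mk _) (one_mul _)
  mul_one := by
    intro a
    induction a using Quotient.ind
    exact congrArg (Quotient.mk _) (mul_one _)
  inv_mul_cancel := by
    intro a
    induction a using Quotient.ind with
    | _ a =>
      refine Quotient.sound ⟨a⁻¹ * a, inv_mul_idem a, ?_⟩
      rw [one_mul]
      exact inv_mul_idem a

end InverseMonoidLemmas


section Graphs

variable {G : Type u} [Group G] {X : Type v}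

/-- A subgraph of the Cayley graph `Cay(G)` of the `X`-generated group `G` (with assignment
mapping `φ : X → G`), represented by its set of vertices and its set of positive edges:
the positive edge `(g, x)` goes from `g` to `g * φ x` and carries the label `x`; every
subgraph closed under edge inversion is uniquely determined by this data. -/
structure Subgraph (φ : X → G) : Type (max u v) where
  verts : Set G
  edges : Set (G × X)
  src_mem : ∀ e ∈ edges, Prod.fst e ∈ verts
  tgt_mem : ∀ e ∈ edges, e.1 * φ e.2 ∈ verts

namespace Subgraph

variable {φ : X → G}

lemma ext' {Γ Δ : Subgraph φ} (hv : Γ.verts = Δ.verts) (he : Γ.edges = Δ.edges) : Γ = Δ := by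
  cases Γ; cases Δ; cases hv; cases he; rfl

/-- Union of subgraphs. -/
def union (Γ Δ : Subgraph φ) : Subgraph φ where
  verts := Γ.verts ∪ Δ.verts
  edges := Γ.edges ∪ Δ.edges
  src_mem := by
    intro e he
    rcases he with h | h
    · exact Set.mem_union_left _ (Γ.src_mem e h)
    · exact Set.mem_union_right _ (Δ.src_mem e h)
  tgt_mem := by
    intro e he
    rcases he with h | h
    · exact Set.mem_union_left _ (Γ.tgt_mem e h)
    · exact Set.mem_union_right _ (Δ.tgt_mem e h)

instance : Union (Subgraph φ) := ⟨union⟩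

@[simp] lemma union_verts (Γ Δ : Subgraph φ) : (Γ ∪ Δ).verts = Γ.verts ∪ Δ.verts := rfl
@[simp] lemma union_edges (Γ Δ : Subgraph φ) : (Γ ∪ Δ).edges = Γ.edges ∪ Δ.edges := rfl

/-- Left translation of a subgraph by a group element. -/
def smul (g : G) (Γ : Subgraph φ) : Subgraph φ where
  verts := (g * ·) '' Γ.verts
  edges := (fun e => (g * e.1, e.2)) '' Γ.edges
  src_mem := by
    rintro e ⟨e', he', rfl⟩
    exact ⟨e'.1, Γ.src_mem e' he', rfl⟩
  tgt_mem := by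
    rintro e ⟨e', he', rfl⟩
    exact ⟨e'.1 * φ e'.2, Γ.tgt_mem e' he', (mul_assoc g e'.1 (φ e'.2)).symm⟩

instance : SMul G (Subgraph φ) := ⟨smul⟩

@[simp] lemma smul_verts (g : G) (Γ : Subgraph φ) : (g • Γ).verts = (g * ·) '' Γ.verts := rfl
@[simp] lemma smul_edges (g : G) (Γ : Subgraph φ) :
    (g • Γ).edges = (fun e : G × X => (g * e.1, e.2)) '' Γ.edges := rfl

/-- The subgraph relation. -/
instance : HasSubset (Subgraph φ) := ⟨fun Γ Δ => Γ.verts ⊆ Δ.verts ∧ Γ.edges ⊆ Δ.edges⟩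

lemma subset_iff (Γ Δ : Subgraph φ) : Γ ⊆ Δ ↔ Γ.verts ⊆ Δ.verts ∧ Γ.edges ⊆ Δ.edges := Iff.rfl

/-- Finiteness of a subgraph. -/
def IsFinite (Γ : Subgraph φ) : Prop := Γ.verts.Finite ∧ Γ.edges.Finite

/-- A subgraph has no isolated vertices if each of its vertices is an endpoint of one
of its edges. -/
def NoIsolated (Γ : Subgraph φ) : Prop :=
  ∀ v ∈ Γ.verts, ∃ e ∈ Γ.edges, v = e.1 ∨ v = e.1 * φ e.2

/-- `Ed(Γ)`: the subgraph spanned by the edges of `Γ`, i.e. `Γ` with all isolated vertices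
removed. -/
def ed (Γ : Subgraph φ) : Subgraph φ where
  verts := {v | ∃ e ∈ Γ.edges, v = e.1 ∨ v = e.1 * φ e.2}
  edges := Γ.edges
  src_mem := fun e he => ⟨e, he, Or.inl rfl⟩
  tgt_mem := fun e he => ⟨e, he, Or.inr rfl⟩

lemma ed_finite {Γ : Subgraph φ} (h : Γ.IsFinite) : Γ.ed.IsFinite := by
  constructor
  · have hsub : Γ.ed.verts ⊆
        (fun e : G × X => e.1) '' Γ.edges ∪ (fun e : G × X => e.1 * φ e.2) '' Γ.edges := by
      rintro v ⟨e, he, rfl | rfl⟩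
      · exact Set.mem_union_left _ ⟨e, he, rfl⟩
      · exact Set.mem_union_right _ ⟨e, he, rfl⟩
    exact ((h.2.image _).union (h.2.image _)).subset hsub
  · exact h.2

lemma ed_noIsolated (Γ : Subgraph φ) : Γ.ed.NoIsolated := fun _ hv => hv

end Subgraph

open Subgraph

variable {φ : X → G}

/-- The subgraph with the single vertex `g` and no edges. -/
def vertexG (φ : X → G) (g : G) : Subgraph φ :=
  ⟨{g}, ∅, by simp, by simp⟩

/-- `Δ_g`: the edgeless subgraph with vertices `1` and `g`. -/
def deltaG (φ : X → G) (g : G) : Subgraph φ :=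
  ⟨{1, g}, ∅, by simp, by simp⟩

/-- The subgraph spanned by a single (positive) edge. -/
def edgeG (φ : X → G) (e : G × X) : Subgraph φ where
  verts := {e.1, e.1 * φ e.2}
  edges := {e}
  src_mem := by
    intro e' he'
    rw [Set.mem_singleton_iff] at he'
    subst he'
    exact Set.mem_insert _ _
  tgt_mem := by
    intro e' he'
    rw [Set.mem_singleton_iff] at he'
    subst he'
    exact Set.mem_insert_of_mem _ rfl

/-- The empty subgraph. -/
def emptyG (φ : X → G) : Subgraph φ := ⟨∅, ∅, by simp, by simp⟩

lemma edgeG_noIsolated (φ : X → G) (e : G × X) : (edgeG φ e).NoIsolated := by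
  intro v hv
  refine ⟨e, Set.mem_singleton e, ?_⟩
  simpa [edgeG] using hv

/-- Two vertices are adjacent in `Γ` if they are connected by an edge of `Γ`. -/
def adj (Γ : Subgraph φ) (u v : G) : Prop :=
  ∃ e ∈ Γ.edges, (u = e.1 ∧ v = e.1 * φ e.2) ∨ (v = e.1 ∧ u = e.1 * φ e.2)

/-- A subgraph is connected if any two of its vertices are joined by a path running in it. -/
def Connected (Γ : Subgraph φ) : Prop :=
  ∀ u ∈ Γ.verts, ∀ v ∈ Γ.verts, Relation.ReflTransGen (adj Γ) u v

lemma adj_mono {Γ Δ : Subgraph φ} (h : Γ.edges ⊆ Δ.edges) {u v : G} (ha : adj Γ u v) :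
    adj Δ u v := by
  obtain ⟨e, he, hc⟩ := ha
  exact ⟨e, h he, hc⟩

lemma Connected.union {Γ Δ : Subgraph φ} (hΓ : Connected Γ) (hΔ : Connected Δ) (w : G)
    (hw₁ : w ∈ Γ.verts) (hw₂ : w ∈ Δ.verts) : Connected (Γ ∪ Δ) := by
  have hsΓ : Γ.edges ⊆ (Γ ∪ Δ).edges := by
    rw [union_edges]; exact Set.subset_union_left
  have hsΔ : Δ.edges ⊆ (Γ ∪ Δ).edges := by
    rw [union_edges]; exact Set.subset_union_right
  have mΓ : ∀ {p q : G}, Relation.ReflTransGen (adj Γ) p q →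
      Relation.ReflTransGen (adj (Γ ∪ Δ)) p q :=
    fun h => Relation.ReflTransGen.mono (fun _ _ h' => adj_mono hsΓ h') _ _ h
  have mΔ : ∀ {p q : G}, Relation.ReflTransGen (adj Δ) p q →
      Relation.ReflTransGen (adj (Γ ∪ Δ)) p q :=
    fun h => Relation.ReflTransGen.mono (fun _ _ h' => adj_mono hsΔ h') _ _ h
  intro u hu v hv
  rw [union_verts] at hu hv
  rcases hu with hu | hu <;> rcases hv with hv | hv
  · exact mΓ (hΓ u hu v hv)
  · exact (mΓ (hΓ u hu w hw₁)).trans (mΔ (hΔ w hw₂ v hv))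
  · exact (mΔ (hΔ u hu w hw₂)).trans (mΓ (hΓ w hw₁ v hv))
  · exact mΔ (hΔ u hu v hv)

lemma Connected.smul {Γ : Subgraph φ} (g : G) (h : Connected Γ) : Connected (g • Γ) := by
  intro u hu v hv
  rw [smul_verts] at hu hv
  obtain ⟨u', hu', rfl⟩ := hu
  obtain ⟨v', hv', rfl⟩ := hv
  refine Relation.ReflTransGen.lift (fun z => g * z) ?_ _ _ (h u' hu' v' hv')
  rintro p q ⟨e, he, hc⟩
  refine ⟨(g * e.1, e.2), ?_, ?_⟩
  · rw [smul_edges]; exact ⟨e, he, rfl⟩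
  · rcases hc with ⟨rfl, rfl⟩ | ⟨rfl, rfl⟩
    · exact Or.inl ⟨rfl, (mul_assoc _ _ _).symm⟩
    · exact Or.inr ⟨rfl, (mul_assoc _ _ _).symm⟩

lemma Subgraph.NoIsolated.union {Γ Δ : Subgraph φ} (hΓ : Γ.NoIsolated) (hΔ : Δ.NoIsolated) :
    (Γ ∪ Δ).NoIsolated := by
  intro v hv
  rw [union_verts] at hv
  rcases hv with hv | hv
  · obtain ⟨e, he, hor⟩ := hΓ v hv
    exact ⟨e, by rw [union_edges]; exact Set.mem_union_left _ he, hor⟩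
  · obtain ⟨e, he, hor⟩ := hΔ v hv
    exact ⟨e, by rw [union_edges]; exact Set.mem_union_right _ he, hor⟩

lemma Subgraph.NoIsolated.smul {Γ : Subgraph φ} (g : G) (h : Γ.NoIsolated) :
    (g • Γ).NoIsolated := by
  intro v hv
  rw [smul_verts] at hv
  obtain ⟨u, hu, rfl⟩ := hv
  obtain ⟨e, he, hor⟩ := h u hu
  refine ⟨(g * e.1, e.2), by rw [smul_edges]; exact ⟨e, he, rfl⟩, ?_⟩
  rcases hor with rfl | rfl
  · exact Or.inl rfl
  · exact Or.inr (mul_assoc _ _ _).symm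

end Graphs


section Expansions

variable {G : Type u} [Group G] {X : Type v} {φ : X → G}

open Subgraph

/-- `F(G)`: pairs `(Γ, g)` where `Γ` is a finite subgraph of `Cay(G)` having `1` and `g`
among its vertices. -/
structure FExp (φ : X → G) : Type (max u v) where
  graph : Subgraph φ
  elt : G
  finite : graph.IsFinite
  one_mem : (1 : G) ∈ graph.verts
  elt_mem : elt ∈ graph.verts

namespace FExp

lemma ext' {a b : FExp φ} (hg : a.graph = b.graph) (he : a.elt = b.elt) : a = b := by
  cases a; cases b; cases hg; cases he; rfl

instance : Mul (FExp φ) :=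
  ⟨fun a b =>
    { graph := a.graph ∪ a.elt • b.graph
      elt := a.elt * b.elt
      finite := ⟨by
          rw [union_verts, smul_verts]
          exact a.finite.1.union (b.finite.1.image _),
        by
          rw [union_edges, smul_edges]
          exact a.finite.2.union (b.finite.2.image _)⟩
      one_mem := by
        rw [union_verts]
        exact Set.mem_union_left _ a.one_mem
      elt_mem := by
        rw [union_verts]
        refine Set.mem_union_right _ ?_
        rw [smul_verts]
        exact ⟨b.elt, b.elt_mem, rfl⟩ }⟩

@[simp] lemma mul_graph (a b : FExp φ) : (a * b).graph = a.graph ∪ a.elt • b.graph := rfl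
@[simp] lemma mul_elt (a b : FExp φ) : (a * b).elt = a.elt * b.elt := rfl

instance : One (FExp φ) :=
  ⟨{ graph := deltaG φ 1
     elt := 1
     finite := ⟨(Set.finite_singleton (1 : G)).insert 1, Set.finite_empty⟩
     one_mem := Set.mem_insert 1 _
     elt_mem := Set.mem_insert 1 _ }⟩

@[simp] lemma one_graph : (1 : FExp φ).graph = deltaG φ 1 := rfl
@[simp] lemma one_elt : (1 : FExp φ).elt = 1 := rfl

instance : Inv (FExp φ) :=
  ⟨fun a =>
    { graph := a.elt⁻¹ • a.graph
      elt := a.elt⁻¹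
      finite := ⟨by rw [smul_verts]; exact a.finite.1.image _,
        by rw [smul_edges]; exact a.finite.2.image _⟩
      one_mem := by
        rw [smul_verts]
        exact ⟨a.elt, a.elt_mem, inv_mul_cancel a.elt⟩
      elt_mem := by
        rw [smul_verts]
        exact ⟨1, a.one_mem, mul_one _⟩ }⟩

@[simp] lemma inv_graph (a : FExp φ) : (a⁻¹).graph = a.elt⁻¹ • a.graph := rfl
@[simp] lemma inv_elt (a : FExp φ) : (a⁻¹).elt = a.elt⁻¹ := rfl

end FExp

/-- The element `(Δ_g, g)` of `F(G)`. -/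
def maxElt (φ : X → G) (g : G) : FExp φ where
  graph := deltaG φ g
  elt := g
  finite := ⟨(Set.finite_singleton g).insert 1, Set.finite_empty⟩
  one_mem := Set.mem_insert 1 _
  elt_mem := Set.mem_insert_of_mem _ rfl

/-- The max-operation `(Γ, g) ↦ (Δ_g, g)` on `F(G)`. -/
def mxOp (a : FExp φ) : FExp φ := maxElt φ a.elt

/-- The generator `(Γ_x, x_G)` of `F(G)`. -/
def genElt (φ : X → G) (x : X) : FExp φ where
  graph := edgeG φ (1, x)
  elt := φ x
  finite := ⟨(Set.finite_singleton _).insert _, Set.finite_singleton _⟩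
  one_mem := Set.mem_insert 1 _
  elt_mem := by simp [edgeG]

/-- `M(G)`: the Margolis–Meakin expansion; pairs `(Γ, g)` where `Γ` is a finite *connected*
subgraph of `Cay(G)` having `1` and `g` among its vertices. -/
structure MExp (φ : X → G) : Type (max u v) where
  graph : Subgraph φ
  elt : G
  finite : graph.IsFinite
  connected : Connected graph
  one_mem : (1 : G) ∈ graph.verts
  elt_mem : elt ∈ graph.verts

namespace MExp

instance : Mul (MExp φ) :=
  ⟨fun a b =>
    { graph := a.graph ∪ a.elt • b.graph
      elt := a.elt * b.elt
      finite := ⟨by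
          rw [union_verts, smul_verts]
          exact a.finite.1.union (b.finite.1.image _),
        by
          rw [union_edges, smul_edges]
          exact a.finite.2.union (b.finite.2.image _)⟩
      connected := by
        refine Connected.union a.connected (Connected.smul a.elt b.connected) a.elt a.elt_mem ?_
        rw [smul_verts]
        exact ⟨1, b.one_mem, mul_one _⟩
      one_mem := by
        rw [union_verts]
        exact Set.mem_union_left _ a.one_mem
      elt_mem := by
        rw [union_verts]
        refine Set.mem_union_right _ ?_
        rw [smul_verts]
        exact ⟨b.elt, b.elt_mem, rfl⟩ }⟩

end MExp

/-- `P(G)`: pairs `(Γ, g)` where `Γ` is a finite subgraph of `Cay(G)` without isolated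
vertices and `g ∈ G` (a model of the semidirect product of the semilattice of such
subgraphs by `G`). -/
structure PExp (φ : X → G) : Type (max u v) where
  graph : Subgraph φ
  elt : G
  finite : graph.IsFinite
  noIsolated : graph.NoIsolated

namespace PExp

lemma ext' {a b : PExp φ} (hg : a.graph = b.graph) (he : a.elt = b.elt) : a = b := by
  cases a; cases b; cases hg; cases he; rfl

instance : Mul (PExp φ) :=
  ⟨fun a b =>
    { graph := a.graph ∪ a.elt • b.graph
      elt := a.elt * b.elt
      finite := ⟨by
          rw [union_verts, smul_verts]
          exact a.finite.1.union (b.finite.1.image _),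
        by
          rw [union_edges, smul_edges]
          exact a.finite.2.union (b.finite.2.image _)⟩
      noIsolated := a.noIsolated.union (b.noIsolated.smul a.elt) }⟩

@[simp] lemma mul_graph (a b : PExp φ) : (a * b).graph = a.graph ∪ a.elt • b.graph := rfl
@[simp] lemma mul_elt (a b : PExp φ) : (a * b).elt = a.elt * b.elt := rfl

instance : One (PExp φ) :=
  ⟨{ graph := emptyG φ
     elt := 1
     finite := ⟨Set.finite_empty, Set.finite_empty⟩
     noIsolated := by intro v hv; simp [emptyG] at hv }⟩

@[simp] lemma one_graph : (1 : PExp φ).graph = emptyG φ := rfl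
@[simp] lemma one_elt : (1 : PExp φ).elt = 1 := rfl

instance : Inv (PExp φ) :=
  ⟨fun a =>
    { graph := a.elt⁻¹ • a.graph
      elt := a.elt⁻¹
      finite := ⟨by rw [smul_verts]; exact a.finite.1.image _,
        by rw [smul_edges]; exact a.finite.2.image _⟩
      noIsolated := a.noIsolated.smul _ }⟩

@[simp] lemma inv_graph (a : PExp φ) : (a⁻¹).graph = a.elt⁻¹ • a.graph := rfl
@[simp] lemma inv_elt (a : PExp φ) : (a⁻¹).elt = a.elt⁻¹ := rfl

end PExp

/-- The max-operation `(Γ, g) ↦ (∅, g)` on `P(G)`. -/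
def pMax (a : PExp φ) : PExp φ where
  graph := emptyG φ
  elt := a.elt
  finite := ⟨Set.finite_empty, Set.finite_empty⟩
  noIsolated := by intro v hv; simp [emptyG] at hv

/-- The generator `(Γ_x, x_G)` of `P(G)`. -/
def genEltP (φ : X → G) (x : X) : PExp φ where
  graph := edgeG φ (1, x)
  elt := φ x
  finite := ⟨(Set.finite_singleton _).insert _, Set.finite_singleton _⟩
  noIsolated := edgeG_noIsolated φ (1, x)

/-- The canonical map `F(G) → P(G)`, `(Γ, g) ↦ (Ed(Γ), g)`. -/
def edMap (a : FExp φ) : PExp φ where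
  graph := a.graph.ed
  elt := a.elt
  finite := ed_finite a.finite
  noIsolated := a.graph.ed_noIsolated

/-- The relation `θ` on `F(G)`: `(Γ,g) θ (Ξ,h)` iff `g = h` and `Ed(Γ) = Ed(Ξ)`. -/
def thetaRel (φ : X → G) (a b : FExp φ) : Prop := a.elt = b.elt ∧ a.graph.ed = b.graph.ed

end Expansions

section Terms

variable {X : Type v}

/-- Terms of the term algebra `I^m_X` in their (unique) normal form
`u₀ · m(v₁) · u₁ ⋯ u_{n-1} · m(vₙ) · uₙ` with `uᵢ, vⱼ` words in the free monoid with
involution `I_X` on `X` (represented as lists over `X ⊕ X`, where `inl x` stands for `x`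
and `inr x` for `x⁻¹`): the first component is `u₀`, and the second lists the pairs
`(vᵢ, uᵢ)`. -/
abbrev MTerm (X : Type v) := List (X ⊕ X) × List (List (X ⊕ X) × List (X ⊕ X))

/-- Value of a letter of `X ⊔ X⁻¹`. -/
def letterVal {M : Type w} [Monoid M] [Inv M] (f : X → M) : X ⊕ X → M
  | Sum.inl x => f x
  | Sum.inr x => (f x)⁻¹

/-- Value of a word of `I_X`. -/
def wordVal {M : Type w} [Monoid M] [Inv M] (f : X → M) (u : List (X ⊕ X)) : M :=
  (u.map (letterVal f)).prod

/-- Value `[t]` of a term `t ∈ I^m_X` under the assignment `f` of the generators,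
where `mop` is interpreted as the operation `m`. -/
def termVal {M : Type w} [Monoid M] [Inv M] (f : X → M) (mop : M → M) (t : MTerm X) : M :=
  wordVal f t.1 * (t.2.map (fun p => mop (wordVal f p.1) * wordVal f p.2)).prod

end Terms

section Journeys

variable {G : Type u} [Group G] {X : Type v}

/-- The subgraph of `Cay(G)` spanned by the path starting at `g` with label the given word;
for the empty word it is the single vertex `g`. -/
def pathGraph (φ : X → G) : G → List (X ⊕ X) → Subgraph φ
  | g, [] => vertexG φ g
  | g, Sum.inl x :: u => edgeG φ (g, x) ∪ pathGraph φ (g * φ x) u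
  | g, Sum.inr x :: u => edgeG φ (g * (φ x)⁻¹, x) ∪ pathGraph φ (g * (φ x)⁻¹) u

/-- The subgraph of `Cay(G)` spanned by the journey `j_g(w)` induced by the term
`w = u₀ · m(v₁) · u₁ ⋯ · m(vₙ) · uₙ` starting at `g`: traverse the path labelled `u₀`
from `g`, jump to `g·[u₀v₁]`, traverse the path labelled `u₁`, and so on. -/
def journeyGraph (φ : X → G) : G → List (X ⊕ X) → List (List (X ⊕ X) × List (X ⊕ X)) →
    Subgraph φ
  | g, u, [] => pathGraph φ g u
  | g, u, (v, u') :: rest =>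
      pathGraph φ g u ∪ journeyGraph φ (g * wordVal φ u * wordVal φ v) u' rest

end Journeys

/-!
The second component of a product is the product of the second components, and `(Γ, 1)` is
idempotent because `Γ ∪ Γ = Γ`; conversely an idempotent has second component `1`.
Right multiplication of `(Γ, g)` by the idempotent `(g⁻¹ • Ξ, 1)` just adds `Ξ` to the graph.
Hence `(Γ, g)` and `(Ξ, g)` agree after multiplying by `(g⁻¹ • (Γ ∪ Ξ), 1)`, and
`(Γ, g) = (Δ_g, g) · (g⁻¹ • Γ, 1)`.
-/

section FInverse

variable {G : Type u} [Group G] {X : Type v} {φ : X → G}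

open Subgraph

namespace Subgraph

instance : MulAction G (Subgraph φ) where
  smul g Γ := g • Γ
  one_smul Γ := Subgraph.ext' (by simp) (by simp)
  mul_smul g h Γ := Subgraph.ext' (by simp only [smul_verts, Set.image_image, mul_assoc])
    (by simp only [smul_edges, Set.image_image, mul_assoc])

lemma union_eq_right_of_subset {Γ Δ : Subgraph φ} (h : Γ ⊆ Δ) : Γ ∪ Δ = Δ :=
  Subgraph.ext' (Set.union_eq_right.mpr h.1) (Set.union_eq_right.mpr h.2)

lemma subset_union_left (Γ Δ : Subgraph φ) : Γ ⊆ Γ ∪ Δ :=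
  ⟨Set.subset_union_left, Set.subset_union_left⟩

lemma subset_union_right (Γ Δ : Subgraph φ) : Δ ⊆ Γ ∪ Δ :=
  ⟨Set.subset_union_right, Set.subset_union_right⟩

lemma union_self (Γ : Subgraph φ) : Γ ∪ Γ = Γ :=
  union_eq_right_of_subset ⟨subset_rfl, subset_rfl⟩

lemma deltaG_subset {Γ : Subgraph φ} {g : G} (h1 : 1 ∈ Γ.verts) (hg : g ∈ Γ.verts) :
    deltaG φ g ⊆ Γ :=
  ⟨Set.insert_subset h1 (Set.singleton_subset_iff.mpr hg), Set.empty_subset _⟩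

lemma IsFinite.union {Γ Δ : Subgraph φ} (hΓ : Γ.IsFinite) (hΔ : Δ.IsFinite) :
    (Γ ∪ Δ).IsFinite :=
  ⟨hΓ.1.union hΔ.1, hΓ.2.union hΔ.2⟩

lemma IsFinite.smul {Γ : Subgraph φ} (g : G) (hΓ : Γ.IsFinite) : (g • Γ).IsFinite :=
  ⟨hΓ.1.image _, hΓ.2.image _⟩

end Subgraph

namespace FExp

lemma mul_self_of_elt_eq_one {e : FExp φ} (he : e.elt = 1) : e * e = e :=
  ext' (by rw [mul_graph, he, one_smul, union_self]) (by rw [mul_elt, he, mul_one])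

lemma elt_eq_one_of_mul_self {e : FExp φ} (he : e * e = e) : e.elt = 1 :=
  mul_eq_right.mp (congrArg elt he)

def idemAt (g : G) (Γ : Subgraph φ) (hΓ : Γ.IsFinite) (hg : g ∈ Γ.verts) : FExp φ where
  graph := g⁻¹ • Γ
  elt := 1
  finite := hΓ.smul g⁻¹
  one_mem := ⟨g, hg, inv_mul_cancel g⟩
  elt_mem := ⟨g, hg, inv_mul_cancel g⟩

lemma idemAt_mul_self (g : G) (Γ : Subgraph φ) (hΓ : Γ.IsFinite) (hg : g ∈ Γ.verts) :
    idemAt g Γ hΓ hg * idemAt g Γ hΓ hg = idemAt g Γ hΓ hg :=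
  mul_self_of_elt_eq_one rfl

lemma mul_idemAt_graph {a : FExp φ} {g : G} (ha : a.elt = g) (Γ : Subgraph φ)
    (hΓ : Γ.IsFinite) (hg : g ∈ Γ.verts) : (a * idemAt g Γ hΓ hg).graph = a.graph ∪ Γ := by
  rw [mul_graph, idemAt, ha, smul_inv_smul]

lemma sigma_iff_elt_eq (a b : FExp φ) : sigma a b ↔ a.elt = b.elt := by
  constructor
  · rintro ⟨e, he, hab⟩
    simpa only [mul_elt, elt_eq_one_of_mul_self he, mul_one] using congrArg elt hab
  · intro h
    have hΓ := a.finite.union b.finite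
    have ha : a.elt ∈ (a.graph ∪ b.graph).verts := Set.mem_union_left _ a.elt_mem
    refine ⟨idemAt a.elt _ hΓ ha, idemAt_mul_self _ _ _ _, ext' ?_ (congrArg (· * 1) h)⟩
    rw [mul_idemAt_graph rfl, mul_idemAt_graph h.symm,
      union_eq_right_of_subset (subset_union_left _ _),
      union_eq_right_of_subset (subset_union_right _ _)]

lemma nle_maxElt_of_elt_eq {a : FExp φ} {g : G} (h : a.elt = g) : nle a (maxElt φ g) := by
  subst h
  refine ⟨idemAt a.elt a.graph a.finite a.elt_mem, idemAt_mul_self _ _ _ _, ?_⟩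
  refine ext' ?_ (mul_one _).symm
  rw [mul_idemAt_graph (a := maxElt φ a.elt) (g := a.elt) rfl]
  exact (union_eq_right_of_subset (deltaG_subset a.one_mem a.elt_mem)).symm

end FExp

end FInverse

theorem statement8_general {G : Type u} [Group G] {X : Type v} (φ : X → G) :
    -- (Γ,g) ↦ g is a monoid morphism
    (∀ a b : FExp φ, (a * b).elt = a.elt * b.elt) ∧
    ((1 : FExp φ).elt = 1) ∧
    -- surjective
    Function.Surjective (fun a : FExp φ => a.elt) ∧
    -- idempotent pure
    (∀ a : FExp φ, a.elt = 1 → a * a = a) ∧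
    -- its kernel congruence is exactly σ
    (∀ a b : FExp φ, sigma a b ↔ a.elt = b.elt) ∧
    -- each (Δ_g, g) is the maximum element of its σ-class
    (∀ g : G, ∀ a : FExp φ, sigma a (maxElt φ g) → nle a (maxElt φ g)) ∧
    -- F(G) is F-inverse with max-operation m(Γ,g) = (Δ_g, g)
    IsMaxOp (fun a : FExp φ => maxElt φ a.elt) := by
  refine ⟨fun _ _ => rfl, rfl, fun g => ⟨maxElt φ g, rfl⟩,
    fun _ => FExp.mul_self_of_elt_eq_one, FExp.sigma_iff_elt_eq, fun _ _ h => ?_,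
    fun a => ⟨(FExp.sigma_iff_elt_eq _ _).mpr rfl, fun _ h => ?_⟩⟩ <;>
  exact FExp.nle_maxElt_of_elt_eq ((FExp.sigma_iff_elt_eq _ _).mp h)

/-- For an `X`-generated group `G`, the projection `F(G) → G, (Γ,g) ↦ g` is a
surjective monoid morphism which is idempotent pure; its kernel congruence is exactly the
minimum group congruence σ of `F(G)` (i.e. `(Γ,g) σ (Ξ,h)` iff `g = h`), so `G` is the
maximum group quotient of `F(G)`.  Moreover each `(Δ_g, g)` is the maximum element of its
σ-class; hence `F(G)` is an F-inverse monoid with max-operation `m(Γ,g) = (Δ_g, g)`. -/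
theorem statement8 {G : Type u} [Group G] {X : Type v} (φ : X → G)
    (hφ : Subgroup.closure (Set.range φ) = ⊤) :
    -- (Γ,g) ↦ g is a monoid morphism
    (∀ a b : FExp φ, (a * b).elt = a.elt * b.elt) ∧
    ((1 : FExp φ).elt = 1) ∧
    -- surjective
    Function.Surjective (fun a : FExp φ => a.elt) ∧
    -- idempotent pure
    (∀ a : FExp φ, a.elt = 1 → a * a = a) ∧
    -- its kernel congruence is exactly σ
    (∀ a b : FExp φ, sigma a b ↔ a.elt = b.elt) ∧
    -- each (Δ_g, g) is the maximum element of its σ-class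
    (∀ g : G, ∀ a : FExp φ, sigma a (maxElt φ g) → nle a (maxElt φ g)) ∧
    -- F(G) is F-inverse with max-operation m(Γ,g) = (Δ_g, g)
    IsMaxOp (fun a : FExp φ => maxElt φ a.elt) :=
  statement8_general φ

end FInvPaper
end

section
/- For an F-inverse monoid S the following are equivalent: (1) S is perfect, i.e., the set product of any two σ-classes is again an entire σ-class; (2) m(a)·m(b) = m(a·b) for all a, b ∈ S; (3) m(a)·m(a⁻¹) = 1 for all a ∈ S. -/
namespace FInvPaper

universe u v w

/-!
As σ is a congruence, `m a · m b` σ `a·b`, hence always `m a · m b ≤ m (a·b)`, and each condition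
supplies the reverse inequality. In a perfect monoid `m (a·b)` lies in the product of the
σ-classes of `a` and `b`, so `m (a·b) = x·y` with `x ≤ m a`, `y ≤ m b`. Under (3),
`m (a·b) · m (b⁻¹)` is σ-related to `a`, so `m (a·b) = m (a·b) · m (b⁻¹) · m b ≤ m a · m b`.
Conversely, (2) gives (3) because `m (a·a⁻¹) = m 1 = 1`, and under (2) every element of the
σ-class of `a·b` has the form `m a · (m b · e)` with `e` idempotent.
-/

section NaturalOrder

variable {S : Type u} [InverseMonoid S]

lemma nle_trans {a b c : S} (h₁ : nle a b) (h₂ : nle b c) : nle a c := by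
  obtain ⟨e, he, rfl⟩ := h₁
  obtain ⟨f, hf, rfl⟩ := h₂
  exact ⟨f * e, idem_mul_idem hf he, mul_assoc _ _ _⟩

lemma nle_antisymm {a b : S} (h₁ : nle a b) (h₂ : nle b a) : a = b := by
  obtain ⟨e, he, rfl⟩ := h₁
  obtain ⟨f, hf, hb⟩ := h₂
  have hb' : b = b * (e * f) := by rw [← mul_assoc]; exact hb
  calc b * e = b * (e * f) * e := by rw [← hb']
  _ = b * (e * (f * e)) := by simp only [mul_assoc]
  _ = b * (e * e * f) := by rw [InverseMonoid.idem_comm f e hf he, mul_assoc]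
  _ = b := by rw [he, ← hb']

lemma sigma_of_nle {a b : S} (h : nle a b) : sigma a b := by
  obtain ⟨e, he, rfl⟩ := h
  exact ⟨e, he, by rw [mul_assoc, he]⟩

lemma nle_mul_left {a b : S} (c : S) (h : nle a b) : nle (c * a) (c * b) := by
  obtain ⟨e, he, rfl⟩ := h
  exact ⟨e, he, (mul_assoc _ _ _).symm⟩

lemma inv_mul_idem_mul_idem {e : S} (he : e * e = e) (c : S) :
    (c⁻¹ * e * c) * (c⁻¹ * e * c) = c⁻¹ * e * c := by
  calc (c⁻¹ * e * c) * (c⁻¹ * e * c) = c⁻¹ * (e * (c * c⁻¹)) * e * c := by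
        simp only [mul_assoc]
  _ = c⁻¹ * c * c⁻¹ * (e * e) * c := by
        rw [InverseMonoid.idem_comm e _ he (mul_inv_idem c)]; simp only [mul_assoc]
  _ = c⁻¹ * e * c := by rw [he, inv_mul_self_mul]

lemma nle_mul_right {a b : S} (c : S) (h : nle a b) : nle (a * c) (b * c) := by
  obtain ⟨e, he, rfl⟩ := h
  refine ⟨c⁻¹ * e * c, inv_mul_idem_mul_idem he c, ?_⟩
  calc b * e * c = b * e * (c * c⁻¹ * c) := by rw [InverseMonoid.mul_inv_self_mul]
  _ = b * (e * (c * c⁻¹)) * c := by simp only [mul_assoc]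
  _ = b * c * (c⁻¹ * e * c) := by
        rw [InverseMonoid.idem_comm e _ he (mul_inv_idem c)]; simp only [mul_assoc]

lemma eq_one_of_one_nle {a : S} (h : nle 1 a) : a = 1 := by
  obtain ⟨e, he, h1⟩ := h
  have hinv : a⁻¹ * a⁻¹ = a⁻¹ := by
    have : a⁻¹ = a⁻¹ * a * e := by rw [mul_assoc, ← h1, mul_one]
    rw [this]
    exact idem_mul_idem (inv_mul_idem a) he
  have hidem : a * a = a := by
    have := idem_inv hinv
    rw [InverseMonoid.inv_inv] at this
    rwa [← this] at hinv
  calc a = a * (a * e) := by rw [← h1, mul_one]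
  _ = 1 := by rw [← mul_assoc, hidem, h1]

end NaturalOrder

section MaxOperation

variable {S : Type u} [FInverseMonoid S]

def sigmaClass (a : S) : Set S := {b | sigma b a}

lemma mx_sigma (a : S) : sigma (mx a) a := (FInverseMonoid.mx_isMaxOp a).1

lemma nle_mx {a b : S} (h : sigma b a) : nle b (mx a) := (FInverseMonoid.mx_isMaxOp a).2 b h

lemma mx_eq_of_sigma {a b : S} (h : sigma a b) : mx a = mx b :=
  nle_antisymm (nle_mx (sigma_trans (mx_sigma a) h))
    (nle_mx (sigma_trans (mx_sigma b) (sigma_symm h)))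

lemma mx_one : mx (1 : S) = 1 := eq_one_of_one_nle (nle_mx (sigma_refl 1))

lemma sigma_mul {a b c d : S} (h₁ : sigma a b) (h₂ : sigma c d) : sigma (a * c) (b * d) :=
  sigma_trans (sigma_mul_right c h₁) (sigma_mul_left b h₂)

lemma mx_mul_nle_mx_mul (a b : S) : nle (mx a * mx b) (mx (a * b)) :=
  nle_mx (sigma_mul (mx_sigma a) (mx_sigma b))

open scoped Pointwise

lemma sigmaClass_mul_subset (a b : S) : sigmaClass a * sigmaClass b ⊆ sigmaClass (a * b) := by
  rintro _ ⟨x, hx, y, hy, rfl⟩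
  exact sigma_mul hx hy

lemma mx_mul_eq_of_mx_mem {a b : S} (h : mx (a * b) ∈ sigmaClass a * sigmaClass b) :
    mx a * mx b = mx (a * b) := by
  obtain ⟨x, hx, y, hy, hxy⟩ := h
  refine nle_antisymm (mx_mul_nle_mx_mul a b) ?_
  rw [← hxy]
  exact nle_trans (nle_mul_right y (nle_mx hx)) (nle_mul_left (mx a) (nle_mx hy))

lemma sigmaClass_mul_eq_of_mx_mul_eq {a b : S} (h : mx a * mx b = mx (a * b)) :
    sigmaClass a * sigmaClass b = sigmaClass (a * b) := by
  refine (sigmaClass_mul_subset a b).antisymm fun c hc => ?_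
  obtain ⟨e, he, rfl⟩ : nle c (mx a * mx b) := h ▸ nle_mx hc
  rw [mul_assoc]
  exact Set.mul_mem_mul (mx_sigma a) (sigma_trans (sigma_of_nle ⟨e, he, rfl⟩) (mx_sigma b))

lemma mx_mul_mx_inv_of_mx_mul_eq (h : ∀ a b : S, mx a * mx b = mx (a * b)) (a : S) :
    mx a * mx a⁻¹ = 1 := by
  have hσ : sigma (a * a⁻¹) 1 := ⟨a * a⁻¹, mul_inv_idem a, by rw [mul_inv_idem, one_mul]⟩
  rw [h, mx_eq_of_sigma hσ, mx_one]

lemma mx_mul_eq_of_mx_inv_mul_mx_eq_one {a b : S} (h : mx b⁻¹ * mx b = 1) :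
    mx a * mx b = mx (a * b) := by
  have hσ : sigma (mx (a * b) * mx b⁻¹) a :=
    sigma_trans (sigma_mul (mx_sigma (a * b)) (mx_sigma b⁻¹))
      (sigma_of_nle ⟨b * b⁻¹, mul_inv_idem b, mul_assoc a b b⁻¹⟩)
  have hle : nle (mx (a * b) * mx b⁻¹ * mx b) (mx a * mx b) := nle_mul_right (mx b) (nle_mx hσ)
  rw [mul_assoc, h, mul_one] at hle
  exact nle_antisymm (mx_mul_nle_mx_mul a b) hle

end MaxOperation

open scoped Pointwise in
/-- For an F-inverse monoid `S` the following are equivalent: (1) `S` is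
perfect, i.e. the (pointwise) set product of any two σ-classes is again an entire σ-class;
(2) `m a · m b = m (a·b)` for all `a, b`; (3) `m a · m (a⁻¹) = 1` for all `a`. -/
theorem statement15 {S : Type u} [FInverseMonoid S] :
    ((∀ A B : Set S, IsSigmaClass A → IsSigmaClass B → IsSigmaClass (A * B)) ↔
      ∀ a b : S, mx a * mx b = mx (a * b)) ∧
    ((∀ a b : S, mx a * mx b = mx (a * b)) ↔ ∀ a : S, mx a * mx (a⁻¹) = 1) := by
  refine ⟨⟨fun hperf a b => ?_, fun hmx => ?_⟩,
    ⟨mx_mul_mx_inv_of_mx_mul_eq, fun hinv a b => mx_mul_eq_of_mx_inv_mul_mx_eq_one ?_⟩⟩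
  · obtain ⟨d, hd⟩ : ∃ d, sigmaClass a * sigmaClass b = sigmaClass d :=
      hperf (sigmaClass a) (sigmaClass b) ⟨a, rfl⟩ ⟨b, rfl⟩
    have hab : a * b ∈ sigmaClass d := hd ▸ Set.mul_mem_mul (sigma_refl a) (sigma_refl b)
    exact mx_mul_eq_of_mx_mem (hd ▸ sigma_trans (mx_sigma (a * b)) hab)
  · rintro A B ⟨a, rfl⟩ ⟨b, rfl⟩
    exact ⟨a * b, sigmaClass_mul_eq_of_mx_mul_eq (hmx a b)⟩
  · simpa only [InverseMonoid.inv_inv] using hinv b⁻¹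

end FInvPaper
end

section
/- Let G be an X-generated group. Define a relation θ on F(G) by: (Γ,g) θ (Ξ,h) if and only if g = h and Ed(Γ) = Ed(Ξ). Then θ is a congruence on F(G) compatible with ·, ⁻¹ and the max-operation m, the quotient F(G)/θ is a perfect F-inverse monoid, and θ is contained in every congruence ρ on F(G) (compatible with ·, ⁻¹ and m) for which F(G)/ρ is perfect; that is, θ is the smallest congruence on F(G) with perfect quotient. -/
namespace FInvPaper

universe u v w

/-! `θ` identifies two elements exactly when they differ by isolated vertices, i.e. by an
edgeless idempotent factor: if `a θ b`, then multiplying `a` on the left by the edgeless element on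
the vertices of `b` gives the same element as multiplying `b` by the edgeless element on the
vertices of `a`. The quotient is perfect because `m(a)·m(a⁻¹) = (Δ_g ∪ gΔ_{g⁻¹}, 1)` is edgeless.
Conversely, in a perfect quotient `m(v)·m(v⁻¹) = ({1, v}, 1)` is identified with `1`, and products
of these elements give every edgeless element `(V, 1)`, so every such congruence contains `θ`. -/

section Theta

variable {G : Type u} [Group G] {X : Type v} {φ : X → G}

open Subgraph

lemma Subgraph.ed_eq_ed_iff {Γ Δ : Subgraph φ} : Γ.ed = Δ.ed ↔ Γ.edges = Δ.edges := by
  refine ⟨congrArg Subgraph.edges, fun h => Subgraph.ext' ?_ h⟩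
  simp only [ed, h]

lemma thetaRel_iff {a b : FExp φ} :
    thetaRel φ a b ↔ a.elt = b.elt ∧ a.graph.edges = b.graph.edges :=
  and_congr_right' ed_eq_ed_iff

lemma FExp.ext_of_verts_edges {a b : FExp φ} (hv : a.graph.verts = b.graph.verts)
    (he : a.graph.edges = b.graph.edges) (hg : a.elt = b.elt) : a = b :=
  FExp.ext' (Subgraph.ext' hv he) hg

lemma FExp.one_mul (a : FExp φ) : 1 * a = a := by
  refine FExp.ext_of_verts_edges ?_ ?_ (_root_.one_mul _)
  · simp only [FExp.mul_graph, FExp.one_graph, FExp.one_elt, union_verts, smul_verts, deltaG,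
      _root_.one_mul, Set.image_id', Set.pair_eq_singleton]
    exact Set.union_eq_right.2 (Set.singleton_subset_iff.2 a.one_mem)
  · simp [deltaG]

lemma thetaRel_equivalence : Equivalence (thetaRel φ) :=
  ⟨fun _ => ⟨rfl, rfl⟩, fun h => ⟨h.1.symm, h.2.symm⟩,
    fun h₁ h₂ => ⟨h₁.1.trans h₂.1, h₁.2.trans h₂.2⟩⟩

lemma thetaRel.mul {a b c d : FExp φ} (hab : thetaRel φ a b) (hcd : thetaRel φ c d) :
    thetaRel φ (a * c) (b * d) := by
  rw [thetaRel_iff] at *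
  simp [hab.1, hab.2, hcd.1, hcd.2]

lemma thetaRel.inv {a b : FExp φ} (h : thetaRel φ a b) : thetaRel φ a⁻¹ b⁻¹ := by
  rw [thetaRel_iff] at *
  simp [h.1, h.2]

lemma thetaRel_mxOp {a b : FExp φ} (h : a.elt = b.elt) : thetaRel φ (mxOp a) (mxOp b) := by
  simp [mxOp, h, thetaRel_equivalence.refl]

lemma thetaRel_mxOp_mul_mxOp_inv (a : FExp φ) : thetaRel φ (mxOp a * mxOp a⁻¹) 1 :=
  thetaRel_iff.2 ⟨by simp [mxOp, maxElt], by simp [mxOp, maxElt, deltaG]⟩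

def edgeless (φ : X → G) (s : Finset G) : FExp φ where
  graph := ⟨insert 1 ↑s, ∅, by simp, by simp⟩
  elt := 1
  finite := ⟨s.finite_toSet.insert 1, Set.finite_empty⟩
  one_mem := Set.mem_insert _ _
  elt_mem := Set.mem_insert _ _

lemma edgeless_empty : edgeless φ ∅ = 1 :=
  FExp.ext_of_verts_edges (by simp [edgeless, deltaG]) rfl rfl

lemma maxElt_mul_maxElt_inv_mul_edgeless [DecidableEq G] (v : G) (s : Finset G) :
    maxElt φ v * maxElt φ v⁻¹ * edgeless φ s = edgeless φ (insert v s) := by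
  refine FExp.ext_of_verts_edges ?_ (by simp [maxElt, deltaG, edgeless])
    (by simp [maxElt, edgeless])
  ext x
  simp only [FExp.mul_graph, union_verts, smul_verts, maxElt, deltaG, edgeless, FExp.mul_elt,
    mul_inv_cancel, one_mul, Set.image_id', Finset.coe_insert, Set.mem_union, Set.mem_insert_iff,
    Set.mem_singleton_iff, Set.mem_image, Finset.mem_coe, or_and_right, exists_or, exists_eq_left,
    mul_one]
  tauto

lemma edgeless_mul_comm_of_thetaRel {a b : FExp φ} (h : thetaRel φ a b) :
    edgeless φ b.finite.1.toFinset * a = edgeless φ a.finite.1.toFinset * b := by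
  obtain ⟨helt, hedges⟩ := thetaRel_iff.1 h
  refine FExp.ext_of_verts_edges ?_ (by simp [edgeless, hedges]) (by simp [edgeless, helt])
  ext x
  simp only [FExp.mul_graph, union_verts, smul_verts, edgeless, one_mul, Set.image_id',
    Set.mem_union, Set.mem_insert_iff, Set.Finite.coe_toFinset]
  tauto

section Perfect

variable {ρ : FExp φ → FExp φ → Prop} (hρ : Equivalence ρ)
  (hmul : ∀ a b c d : FExp φ, ρ a b → ρ c d → ρ (a * c) (b * d))
  (hperf : ∀ a : FExp φ, ρ (mxOp a * mxOp a⁻¹) 1)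
include hρ hmul hperf

lemma rel_edgeless_one (s : Finset G) : ρ (edgeless φ s) 1 := by
  classical
  induction s using Finset.induction_on with
  | empty => exact edgeless_empty (φ := φ) ▸ hρ.refl 1
  | insert v s _ ih =>
    have h := hmul _ _ _ _ (hperf (maxElt φ v)) ih
    rwa [FExp.one_mul, mxOp, mxOp, FExp.inv_elt, maxElt_mul_maxElt_inv_mul_edgeless] at h

lemma thetaRel.rel_of_perfect {a b : FExp φ} (h : thetaRel φ a b) : ρ a b := by
  have ha := hmul _ _ _ _ (rel_edgeless_one hρ hmul hperf b.finite.1.toFinset) (hρ.refl a)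
  have hb := hmul _ _ _ _ (rel_edgeless_one hρ hmul hperf a.finite.1.toFinset) (hρ.refl b)
  rw [FExp.one_mul, edgeless_mul_comm_of_thetaRel h] at ha
  rw [FExp.one_mul] at hb
  exact hρ.trans (hρ.symm ha) hb

end Perfect

end Theta

theorem statement16_general {G : Type u} [Group G] {X : Type v} (φ : X → G) :
    Equivalence (thetaRel φ) ∧
    (∀ a b c d : FExp φ, thetaRel φ a b → thetaRel φ c d → thetaRel φ (a * c) (b * d)) ∧
    (∀ a b : FExp φ, thetaRel φ a b → thetaRel φ a⁻¹ b⁻¹) ∧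
    (∀ a b : FExp φ, thetaRel φ a b → thetaRel φ (mxOp a) (mxOp b)) ∧
    -- the quotient F(G)/θ is perfect
    (∀ a : FExp φ, thetaRel φ (mxOp a * mxOp a⁻¹) 1) ∧
    -- θ is contained in every congruence ρ with perfect quotient
    (∀ ρ : FExp φ → FExp φ → Prop, Equivalence ρ →
      (∀ a b c d : FExp φ, ρ a b → ρ c d → ρ (a * c) (b * d)) →
      (∀ a b : FExp φ, ρ a b → ρ a⁻¹ b⁻¹) →
      (∀ a b : FExp φ, ρ a b → ρ (mxOp a) (mxOp b)) →
      (∀ a : FExp φ, ρ (mxOp a * mxOp a⁻¹) 1) →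
      ∀ a b : FExp φ, thetaRel φ a b → ρ a b) :=
  ⟨thetaRel_equivalence, fun _ _ _ _ => thetaRel.mul, fun _ _ => thetaRel.inv,
    fun _ _ h => thetaRel_mxOp h.1, thetaRel_mxOp_mul_mxOp_inv,
    fun _ hρ hmul _ _ hperf _ _ h => h.rel_of_perfect hρ hmul hperf⟩

/-- The relation `θ` on `F(G)` given by `(Γ,g) θ (Ξ,h)` iff `g = h` and
`Ed(Γ) = Ed(Ξ)` is a congruence compatible with `·`, `⁻¹` and the max-operation `m`; the
quotient `F(G)/θ` is a perfect F-inverse monoid (equivalently, it satisfies the law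
`m x · m (x⁻¹) = 1`, i.e. `θ (m a · m (a⁻¹)) 1` holds for all `a`); and `θ` is contained in
every congruence `ρ` on `F(G)` whose quotient is perfect.  Thus `θ` is the smallest
congruence on `F(G)` with perfect quotient. -/
theorem statement16 {G : Type u} [Group G] {X : Type v} (φ : X → G)
    (hφ : Subgroup.closure (Set.range φ) = ⊤) :
    Equivalence (thetaRel φ) ∧
    (∀ a b c d : FExp φ, thetaRel φ a b → thetaRel φ c d → thetaRel φ (a * c) (b * d)) ∧
    (∀ a b : FExp φ, thetaRel φ a b → thetaRel φ a⁻¹ b⁻¹) ∧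
    (∀ a b : FExp φ, thetaRel φ a b → thetaRel φ (mxOp a) (mxOp b)) ∧
    -- the quotient F(G)/θ is perfect
    (∀ a : FExp φ, thetaRel φ (mxOp a * mxOp a⁻¹) 1) ∧
    -- θ is contained in every congruence ρ with perfect quotient
    (∀ ρ : FExp φ → FExp φ → Prop, Equivalence ρ →
      (∀ a b c d : FExp φ, ρ a b → ρ c d → ρ (a * c) (b * d)) →
      (∀ a b : FExp φ, ρ a b → ρ a⁻¹ b⁻¹) →
      (∀ a b : FExp φ, ρ a b → ρ (mxOp a) (mxOp b)) →
      (∀ a : FExp φ, ρ (mxOp a * mxOp a⁻¹) 1) →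
      ∀ a b : FExp φ, thetaRel φ a b → ρ a b) :=
  statement16_general φ

end FInvPaper
end
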